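/- arXiv:1808.05349 — 3 statements merged into one kernel-verified Lean document; each statement's English description precedes it below -/
import Mathlib

section
/- With u_i = Q_i(t) as above, for all i ≥ 1 one has u_i * u_{i-2} = (u_{i-1} + 1)(u_{i-1} - 1); consequently, for each n ≥ 1 there exist polynomials v_n, w_n ∈ ℤ[t] with u_n = v_n * w_n, v_n dividing u_{n-1} - 1, and w_n dividing u_{n-1} + 1. -/
/-!
The recurrence `Q (n + 2) = X * Q (n + 1) - Q n` preserves the Cassini-type quantity
`Q (n + 2) * Q n - Q (n + 1) ^ 2`, which equals `-1` for the initial values; this is the identity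
`Q (n + 2) * Q n = (Q (n + 1) + 1) * (Q (n + 1) - 1)`. Hence `Q (n + 2)` divides
`(Q (n + 1) - 1) * (Q (n + 1) + 1)`, and since `ℤ[X]` is a GCD domain, every divisor of a product
splits as a product of divisors of the factors.

`Q i` is the paper's `u_{i-1}`.
-/

theorem mul_sub_sq_eq_of_recurrence {R : Type*} [CommRing R] (x : R) (Q : ℕ → R)
    (hrec : ∀ n, Q (n + 2) = x * Q (n + 1) - Q n) (n : ℕ) :
    Q (n + 2) * Q n - Q (n + 1) ^ 2 = Q 2 * Q 0 - Q 1 ^ 2 := by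
  induction n with
  | zero => ring
  | succ n ih => linear_combination ih + Q (n + 1) * hrec (n + 1) - Q (n + 2) * hrec n

/-- With `u i = Q i` (index shifted by one, so `u (i+1)` is the paper's `u_i`),
`u_i * u_{i-2} = (u_{i-1} + 1) * (u_{i-1} - 1)` for all `i ≥ 1`, and consequently for
each `n ≥ 1` there exist `v, w ∈ ℤ[t]` with `u_n = v * w`, `v ∣ u_{n-1} - 1` and
`w ∣ u_{n-1} + 1`. -/
theorem u_mul_u_and_factorization (Q : ℕ → Polynomial ℤ)
    (h0 : Q 0 = -1) (h1 : Q 1 = 0)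
    (hrec : ∀ n, Q (n + 2) = Polynomial.X * Q (n + 1) - Q n) :
    (∀ i : ℕ, 1 ≤ i → Q (i + 1) * Q (i - 1) = (Q i + 1) * (Q i - 1)) ∧
    (∀ n : ℕ, 1 ≤ n → ∃ v w : Polynomial ℤ,
      Q (n + 1) = v * w ∧ v ∣ Q n - 1 ∧ w ∣ Q n + 1) := by
  have h2 : Q 2 = 1 := by rw [hrec 0, h0, h1]; ring
  have cassini : ∀ n, Q (n + 2) * Q n = (Q (n + 1) + 1) * (Q (n + 1) - 1) := fun n => by
    linear_combination mul_sub_sq_eq_of_recurrence _ Q hrec n + Q 0 * h2 + h0 - Q 1 * h1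
  have cassini' : ∀ i, 1 ≤ i → Q (i + 1) * Q (i - 1) = (Q i + 1) * (Q i - 1) := by
    intro i hi
    obtain ⟨m, rfl⟩ := Nat.exists_eq_add_of_le' hi
    exact cassini m
  refine ⟨cassini', fun n hn => ?_⟩
  have hdvd : Q (n + 1) ∣ (Q n - 1) * (Q n + 1) :=
    ⟨Q (n - 1), by rw [cassini' n hn]; ring⟩
  obtain ⟨v, w, hv, hw, hvw⟩ := exists_dvd_and_dvd_of_dvd_mul hdvd
  exact ⟨v, w, hvw, hv, hw⟩
end

section
/- Let R be a commutative ring and suppose M, N ∈ SL_2(R) have the same first row. Then N = E * M where E is a lower triangular elementary matrix, i.e., there exists r ∈ R such that N = [[1,0],[r,1]] * M. -/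
/-! Since `N` and `M` share their first row, `N * M⁻¹` has the first row of the identity; a
determinant-one `2 × 2` matrix with first row `(1, 0)` is lower unitriangular, and
`N = (N * M⁻¹) * M`. -/

namespace Matrix.SpecialLinearGroup

variable {n : Type*} [Fintype n] [DecidableEq n] {R : Type*} [CommRing R]

theorem row_mul_inv_eq_of_row_eq {M N : SpecialLinearGroup n R} {i : n}
    (h : (N : Matrix n n R) i = (M : Matrix n n R) i) :
    ((N * M⁻¹ : SpecialLinearGroup n R) : Matrix n n R) i = (1 : Matrix n n R) i := by
  ext j
  rw [← coe_one, ← mul_inv_cancel M, coe_mul, coe_mul, mul_apply, mul_apply, h]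

theorem eq_lower_unitriangular_of_row_zero {A : SpecialLinearGroup (Fin 2) R}
    (h0 : (A : Matrix (Fin 2) (Fin 2) R) 0 0 = 1) (h1 : (A : Matrix (Fin 2) (Fin 2) R) 0 1 = 0) :
    (A : Matrix (Fin 2) (Fin 2) R) = !![1, 0; (A : Matrix (Fin 2) (Fin 2) R) 1 0, 1] := by
  have h11 : (A : Matrix (Fin 2) (Fin 2) R) 1 1 = 1 := by
    have hdet := A.det_coe
    rwa [det_fin_two, h0, h1, one_mul, zero_mul, sub_zero] at hdet
  ext i j
  fin_cases i <;> fin_cases j <;> simp [h0, h1, h11]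

end Matrix.SpecialLinearGroup

open Matrix.SpecialLinearGroup in
/-- If `M, N ∈ SL₂(R)` have the same first row, then `N = [[1,0],[r,1]] * M` for some `r`. -/
theorem eq_elementary_mul_of_same_first_row {R : Type*} [CommRing R]
    (M N : Matrix.SpecialLinearGroup (Fin 2) R)
    (h0 : (M : Matrix (Fin 2) (Fin 2) R) 0 0 = (N : Matrix (Fin 2) (Fin 2) R) 0 0)
    (h1 : (M : Matrix (Fin 2) (Fin 2) R) 0 1 = (N : Matrix (Fin 2) (Fin 2) R) 0 1) :
    ∃ r : R, (N : Matrix (Fin 2) (Fin 2) R) =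
      !![(1 : R), 0; r, 1] * (M : Matrix (Fin 2) (Fin 2) R) := by
  set E := N * M⁻¹
  have hrow : (E : Matrix (Fin 2) (Fin 2) R) 0 = (1 : Matrix (Fin 2) (Fin 2) R) 0 :=
    row_mul_inv_eq_of_row_eq (funext (Fin.forall_fin_two.2 ⟨h0.symm, h1.symm⟩))
  have hE := eq_lower_unitriangular_of_row_zero (congrFun hrow 0) (congrFun hrow 1)
  refine ⟨(E : Matrix (Fin 2) (Fin 2) R) 1 0, ?_⟩
  rw [← hE, ← coe_mul, inv_mul_cancel_right]
end

section
/- Let K be an imaginary quadratic field with ring of integers R and let p be a nonzero prime element of R with p ≡ 1 (mod 8R). Then for every place v of K lying over 2, the equation -q*x^2 + p*y^2 = 1 has a solution in the completion K_v, for any q ∈ R. -/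
/-!
Write `p = 1 + 8c`. In `K_v` iterate `z ↦ 2c - z²` from `0`: all iterates are divisible by `2`,
and since consecutive iterates `z, z', z''` satisfy `z'' - z' = -(z' - z)(z' + z)`, their
differences are divisible by ever higher powers of `2`, so the iterates converge. The limit
satisfies `z = 2c - z²`, i.e. `(1 + 2z)² = p`, and `(x, y) = (0, (1 + 2z)⁻¹)` solves the equation.
-/

open Filter Topology

namespace Valued

variable {R Γ₀ : Type*} [Ring R] [LinearOrderedCommGroupWithZero Γ₀] [Valued R Γ₀]

instance nonarchimedeanAddGroup : NonarchimedeanAddGroup R where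
  is_nonarchimedean U hU := by
    obtain ⟨γ, hγ⟩ := mem_nhds_zero.mp hU
    exact ⟨⟨v.restrict.ltAddSubgroup γ, isOpen_ball R γ.1⟩, hγ⟩

theorem tendsto_zero_of_v_le {α : Type*} {l : Filter α} {f g : α → R}
    (hg : Tendsto g l (𝓝 0)) (hfg : ∀ a, v (f a) ≤ v (g a)) : Tendsto f l (𝓝 0) := by
  rw [(hasBasis_nhds_zero R Γ₀).tendsto_right_iff] at hg ⊢
  exact fun γ _ ↦ (hg γ trivial).mono fun a ha ↦
    ((Valuation.restrict_le_iff _).mpr (hfg a)).trans_lt ha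

end Valued

def sqrtIterate {R : Type*} [CommRing R] (c : R) : ℕ → R
  | 0 => 0
  | n + 1 => 2 * c - sqrtIterate c n ^ 2

section sqrtIterate

variable {R : Type*} [CommRing R] (c : R)

theorem map_sqrtIterate {S : Type*} [CommRing S] (f : R →+* S) :
    ∀ n, f (sqrtIterate c n) = sqrtIterate (f c) n
  | 0 => map_zero f
  | n + 1 => by
    rw [sqrtIterate, sqrtIterate, map_sub, map_mul, map_pow, map_ofNat, map_sqrtIterate f n]

theorem two_dvd_sqrtIterate : ∀ n, 2 ∣ sqrtIterate c n
  | 0 => dvd_zero 2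
  | n + 1 => by
    obtain ⟨w, hw⟩ := two_dvd_sqrtIterate n
    exact ⟨c - 2 * w ^ 2, by rw [sqrtIterate, hw]; ring⟩

theorem two_pow_dvd_sqrtIterate_succ_sub :
    ∀ n, 2 ^ (n + 1) ∣ sqrtIterate c (n + 1) - sqrtIterate c n
  | 0 => ⟨c, by simp [sqrtIterate]⟩
  | n + 1 => by
    have hstep : sqrtIterate c (n + 2) - sqrtIterate c (n + 1) =
        -((sqrtIterate c (n + 1) - sqrtIterate c n) *
          (sqrtIterate c (n + 1) + sqrtIterate c n)) := by
      simp only [sqrtIterate]; ring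
    rw [hstep, pow_succ, dvd_neg]
    exact mul_dvd_mul (two_pow_dvd_sqrtIterate_succ_sub n)
      (dvd_add (two_dvd_sqrtIterate c _) (two_dvd_sqrtIterate c _))

end sqrtIterate

theorem Valued.isSquare_one_add_eight_mul {K Γ₀ : Type*} [Field K]
    [LinearOrderedCommGroupWithZero Γ₀] [MulArchimedean Γ₀] [Valued K Γ₀] [CompleteSpace K]
    {c : K} (hc : v c ≤ 1) (h2 : v (2 : K) < 1) : IsSquare (1 + 8 * c) := by
  have hdiff : Tendsto (fun n ↦ sqrtIterate c (n + 1) - sqrtIterate c n) atTop (𝓝 0) := by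
    refine tendsto_zero_of_v_le (g := fun n ↦ 2 ^ (n + 1))
      ((tendsto_zero_pow_of_v_lt_one h2).comp (tendsto_add_atTop_nat 1)) fun n ↦ ?_
    obtain ⟨w, hw⟩ := two_pow_dvd_sqrtIterate_succ_sub (⟨c, hc⟩ : v.integer) n
    have hw' : sqrtIterate c (n + 1) - sqrtIterate c n = 2 ^ (n + 1) * w := by
      simpa only [map_sub, map_mul, map_pow, map_ofNat, map_sqrtIterate, Subring.subtype_apply]
        using congrArg v.integer.subtype hw
    rw [hw', map_mul]
    exact mul_le_of_le_one_right' w.2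
  obtain ⟨z, hz⟩ := cauchySeq_tendsto_of_complete
    (NonarchimedeanAddGroup.cauchySeq_of_tendsto_sub_nhds_zero hdiff)
  have hfix : z = 2 * c - z ^ 2 :=
    tendsto_nhds_unique ((tendsto_add_atTop_iff_nat 1).mpr hz)
      (tendsto_const_nhds.sub (hz.pow 2))
  exact ⟨1 + 2 * z, by linear_combination (-4) * hfix⟩

open IsDedekindDomain NumberField

theorem solvable_at_places_over_two_general
    (K : Type*) [Field K] [NumberField K]
    (p : 𝓞 K) (hp : Prime p) (hpmod : (8 : 𝓞 K) ∣ p - 1)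
    (v : HeightOneSpectrum (𝓞 K)) (hv : (2 : 𝓞 K) ∈ v.asIdeal)
    (q : 𝓞 K) :
    ∃ x y : v.adicCompletion K,
      -(algebraMap K (v.adicCompletion K) (algebraMap (𝓞 K) K q)) * x ^ 2 +
        (algebraMap K (v.adicCompletion K) (algebraMap (𝓞 K) K p)) * y ^ 2 = 1 := by
  let ι : 𝓞 K →+* v.adicCompletion K :=
    (algebraMap K (v.adicCompletion K)).comp (algebraMap (𝓞 K) K)
  have hι : Function.Injective ι :=
    (algebraMap K _).injective.comp (IsFractionRing.injective (𝓞 K) K)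
  obtain ⟨c, hc⟩ := hpmod
  have hp_eq : ι p = 1 + 8 * ι c := by
    rw [← map_ofNat ι, ← map_one ι, ← map_mul, ← map_add, ← hc, add_sub_cancel]
  have h2 : Valued.v (2 : v.adicCompletion K) < 1 := by
    rw [← map_ofNat ι]
    exact (v.valuedAdicCompletion_eq_valuation' _).trans_lt
      ((v.valuation_lt_one_iff_mem 2).mpr hv)
  obtain ⟨r, hr⟩ := hp_eq ▸ Valued.isSquare_one_add_eight_mul
    (v.coe_mem_adicCompletionIntegers c) h2
  have hr0 : r ≠ 0 := by
    rintro rfl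
    exact hp.ne_zero ((map_eq_zero_iff ι hι).mp (by simpa using hr))
  refine ⟨0, r⁻¹, ?_⟩
  change _ + ι p * _ = 1
  rw [hr]
  field_simp
  ring

/-- Let `K` be an imaginary quadratic field with ring of integers `R = 𝓞 K`, and let
`p` be a (nonzero) prime element of `R` with `p ≡ 1 (mod 8R)`. Then for every finite
place `v` of `K` lying over `2`, the equation `-q*x² + p*y² = 1` has a solution in the
completion `K_v`, for any `q ∈ R`. -/
theorem solvable_at_places_over_two
    (K : Type*) [Field K] [NumberField K]
    (hdeg : Module.finrank ℚ K = 2)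
    (himag : ∀ w : InfinitePlace K, w.IsComplex)
    (p : 𝓞 K) (hp : Prime p) (hpmod : (8 : 𝓞 K) ∣ p - 1)
    (v : HeightOneSpectrum (𝓞 K)) (hv : (2 : 𝓞 K) ∈ v.asIdeal)
    (q : 𝓞 K) :
    ∃ x y : v.adicCompletion K,
      -(algebraMap K (v.adicCompletion K) (algebraMap (𝓞 K) K q)) * x ^ 2 +
        (algebraMap K (v.adicCompletion K) (algebraMap (𝓞 K) K p)) * y ^ 2 = 1 :=
  solvable_at_places_over_two_general K p hp hpmod v hv q
end
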